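/- For a, b > 0, consider f : ℝ² → ℝ², f(x) = (−3a²x₁ + x₁³ + x₂³, −3b²x₂ + x₁³ + x₂³). The Pareto critical set of f is exactly the ellipse {x ∈ ℝ² : x₁²/a² + x₂²/b² = 1}, and the KKT vector corresponding to a Pareto critical point x is α = (x₁²/a², x₂²/b²)ᵀ. -/

import Mathlib

/-! With `α₀ + α₁ = 1` the KKT combination `α₀ ∇f₁ + α₁ ∇f₂` collapses to
`3 (x₁² - α₀ a², x₂² - α₁ b²)`, so stationarity forces `α = (x₁²/a², x₂²/b²)`, and the
simplex condition `α₀ + α₁ = 1` for this `α` is exactly the equation of the ellipse. -/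

open scoped BigOperators

noncomputable def ellF1 (a : ℝ) (y : EuclideanSpace ℝ (Fin 2)) : ℝ :=
  -3 * a ^ 2 * y 0 + (y 0) ^ 3 + (y 1) ^ 3

noncomputable def ellF2 (b : ℝ) (y : EuclideanSpace ℝ (Fin 2)) : ℝ :=
  -3 * b ^ 2 * y 1 + (y 0) ^ 3 + (y 1) ^ 3

theorem EuclideanSpace.hasGradientAt_of_hasFDerivAt_sum_proj {ι : Type*} [Fintype ι]
    {f : EuclideanSpace ℝ ι → ℝ} {c : ι → ℝ} {x : EuclideanSpace ℝ ι}
    (h : HasFDerivAt f (∑ i, c i • EuclideanSpace.proj (𝕜 := ℝ) i) x) : HasGradientAt f (WithLp.toLp 2 c) x := by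
  rw [hasGradientAt_iff_hasFDerivAt]
  refine h.congr_fderiv ?_
  ext y
  simp [PiLp.inner_apply, mul_comm]

theorem hasGradientAt_ellF1 (a : ℝ) (x : EuclideanSpace ℝ (Fin 2)) :
    HasGradientAt (ellF1 a) !₂[-3 * a ^ 2 + 3 * x 0 ^ 2, 3 * x 1 ^ 2] x := by
  have p0 := (EuclideanSpace.proj (0 : Fin 2) (𝕜 := ℝ)).hasFDerivAt (x := x)
  have p1 := (EuclideanSpace.proj (1 : Fin 2) (𝕜 := ℝ)).hasFDerivAt (x := x)
  refine EuclideanSpace.hasGradientAt_of_hasFDerivAt_sum_proj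
    ((((p0.const_mul (-3 * a ^ 2)).add (p0.pow 3)).add (p1.pow 3)).congr_fderiv ?_)
  ext y
  simp only [PiLp.proj_apply, add_apply, smul_apply,
    smul_eq_mul, Fin.sum_univ_two, Matrix.cons_val_zero, Matrix.cons_val_one,
    Matrix.cons_val_fin_one]
  ring

theorem hasGradientAt_ellF2 (b : ℝ) (x : EuclideanSpace ℝ (Fin 2)) :
    HasGradientAt (ellF2 b) !₂[3 * x 0 ^ 2, -3 * b ^ 2 + 3 * x 1 ^ 2] x := by
  have p0 := (EuclideanSpace.proj (0 : Fin 2) (𝕜 := ℝ)).hasFDerivAt (x := x)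
  have p1 := (EuclideanSpace.proj (1 : Fin 2) (𝕜 := ℝ)).hasFDerivAt (x := x)
  refine EuclideanSpace.hasGradientAt_of_hasFDerivAt_sum_proj
    ((((p1.const_mul (-3 * b ^ 2)).add (p0.pow 3)).add (p1.pow 3)).congr_fderiv ?_)
  ext y
  simp only [PiLp.proj_apply, add_apply, smul_apply,
    smul_eq_mul, Fin.sum_univ_two, Matrix.cons_val_zero, Matrix.cons_val_one,
    Matrix.cons_val_fin_one]
  ring

theorem smul_gradient_ellF_add_smul_gradient_ellF {a b α₀ α₁ : ℝ} (hα : α₀ + α₁ = 1)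
    (x : EuclideanSpace ℝ (Fin 2)) :
    α₀ • gradient (ellF1 a) x + α₁ • gradient (ellF2 b) x =
      (3 : ℝ) • !₂[x 0 ^ 2 - α₀ * a ^ 2, x 1 ^ 2 - α₁ * b ^ 2] := by
  rw [(hasGradientAt_ellF1 a x).gradient, (hasGradientAt_ellF2 b x).gradient]
  ext i
  fin_cases i
  · simp only [Fin.zero_eta, PiLp.add_apply, PiLp.smul_apply, Matrix.cons_val_zero, smul_eq_mul]
    linear_combination (3 * x 0 ^ 2) * hα
  · simp only [Fin.mk_one, PiLp.add_apply, PiLp.smul_apply, Matrix.cons_val_one,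
      Matrix.cons_val_fin_one, smul_eq_mul]
    linear_combination (3 * x 1 ^ 2) * hα

theorem smul_gradient_ellF_add_smul_gradient_ellF_eq_zero_iff {a b α₀ α₁ : ℝ} (ha : a ≠ 0)
    (hb : b ≠ 0) (hα : α₀ + α₁ = 1) (x : EuclideanSpace ℝ (Fin 2)) :
    α₀ • gradient (ellF1 a) x + α₁ • gradient (ellF2 b) x = 0 ↔
      α₀ = x 0 ^ 2 / a ^ 2 ∧ α₁ = x 1 ^ 2 / b ^ 2 := by
  rw [smul_gradient_ellF_add_smul_gradient_ellF hα, smul_eq_zero_iff_right three_ne_zero,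
    eq_div_iff (pow_ne_zero 2 ha), eq_div_iff (pow_ne_zero 2 hb)]
  simp only [WithLp.toLp_eq_zero, funext_iff, Fin.forall_fin_two, Pi.zero_apply,
    Matrix.cons_val_zero, Matrix.cons_val_one, Matrix.cons_val_fin_one, sub_eq_zero]
  exact and_congr eq_comm eq_comm

/-- For `a, b > 0` and `f(x) = (−3a²x₁+x₁³+x₂³, −3b²x₂+x₁³+x₂³)`, the Pareto
critical set is exactly the ellipse `x₁²/a² + x₂²/b² = 1`, with KKT vector
`α = (x₁²/a², x₂²/b²)`. -/
theorem paretoCritical_ellipse (a b : ℝ) (ha : 0 < a) (hb : 0 < b)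
    (x : EuclideanSpace ℝ (Fin 2)) :
    ((∃ α : Fin 2 → ℝ, (∀ i, 0 ≤ α i) ∧ α 0 + α 1 = 1 ∧
        α 0 • gradient (ellF1 a) x + α 1 • gradient (ellF2 b) x = 0) ↔
      (x 0) ^ 2 / a ^ 2 + (x 1) ^ 2 / b ^ 2 = 1) ∧
    (∀ α : Fin 2 → ℝ, (∀ i, 0 ≤ α i) → α 0 + α 1 = 1 →
      α 0 • gradient (ellF1 a) x + α 1 • gradient (ellF2 b) x = 0 →
      α 0 = (x 0) ^ 2 / a ^ 2 ∧ α 1 = (x 1) ^ 2 / b ^ 2) := by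
  have kkt {α₀ α₁ : ℝ} (hα : α₀ + α₁ = 1) :=
    smul_gradient_ellF_add_smul_gradient_ellF_eq_zero_iff ha.ne' hb.ne' hα x
  refine ⟨⟨?_, ?_⟩, fun α _ hα => (kkt hα).mp⟩
  · rintro ⟨α, -, hα, hcrit⟩
    obtain ⟨h₀, h₁⟩ := (kkt hα).mp hcrit
    rw [← h₀, ← h₁, hα]
  · intro hx
    refine ⟨![x 0 ^ 2 / a ^ 2, x 1 ^ 2 / b ^ 2], ?_, hx, (kkt hx).mpr ⟨rfl, rfl⟩⟩
    exact Fin.forall_fin_two.mpr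
      ⟨div_nonneg (sq_nonneg _) (sq_nonneg _), div_nonneg (sq_nonneg _) (sq_nonneg _)⟩
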